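/- arXiv:2408.10396 — 4 statements merged into one kernel-verified Lean document; each statement's English description precedes it below -/
import Mathlib

section
/- Let (Ω, P) be a probability space, a c : ℕ, and let X : Ω → (Fin a → ℝ) and E : Ω → (Fin c → ℝ) be random vectors whose components are all square-integrable (MemLp 2 with respect to P). Let Σ : Matrix (Fin a) (Fin a) ℝ and D : Matrix (Fin c) (Fin c) ℝ be such that covariance (fun ω => X ω i) (fun ω => X ω i') P = Σ i i' for all i i', covariance (fun ω => E ω j) (fun ω => E ω j') P = D j j' for all j j', and E is uncorrelated with X: covariance (fun ω => X ω i) (fun ω => E ω j) P = 0 for all i, j. Let B : Matrix (Fin c) (Fin a) ℝ and μX : Fin a → ℝ, μnew : Fin c → ℝ, and define the new variate field Ynew : Ω → (Fin c → ℝ) by Ynew ω := μnew + B *ᵥ (X ω - μX) + E ω. Then the covariance matrix of the stacked random vector W : Ω → (Fin a ⊕ Fin c → ℝ), W ω := Sum.elim (X ω) (Ynew ω), equals Matrix.fromBlocks Σ (Σ * Bᵀ) (B * Σ) (B * Σ * Bᵀ + D); that is, for all u v : Fin a ⊕ Fin c, covariance (fun ω => W ω u) (fun ω => W ω v) P = (Matrix.fromBlocks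 Σ (Σ * Bᵀ) (B * Σ) (B * Σ * Bᵀ + D)) u v. -/
open MeasureTheory Matrix

/-- Covariance of two real-valued random variables:
`covariance X Y P = ∫ (X − E[X])·(Y − E[Y]) dP`. -/
noncomputable def covariance {Ω : Type*} [MeasurableSpace Ω] (X Y : Ω → ℝ)
    (P : Measure Ω) : ℝ :=
  ∫ ω, (X ω - ∫ ω', X ω' ∂P) * (Y ω - ∫ ω', Y ω' ∂P) ∂P

/-!
Covariance is bilinear on square-integrable variables and insensitive to constant shifts, so
cross-covariance matrices transform like `Cov(m + B (X - μ) + E, Z) = B Cov(X, Z) + Cov(E, Z)`.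
Applied with `Z = X`, `E` and `Ynew`, together with `Cov(X, E) = 0` and the symmetry of
`Cov(X, X)` and `Cov(E, E)`, this gives the four blocks. The `covariance` above is
definitionally Mathlib's `ProbabilityTheory.covariance`, whose calculus is used throughout.
-/

open scoped ProbabilityTheory

noncomputable def crossCovMatrix {Ω ι κ : Type*} [MeasurableSpace Ω] (X : Ω → ι → ℝ)
    (Y : Ω → κ → ℝ) (P : Measure Ω) : Matrix ι κ ℝ :=
  Matrix.of fun i j => cov[fun ω => X ω i, fun ω => Y ω j; P]

section CrossCovMatrix

variable {Ω ι κ ν : Type*} [MeasurableSpace Ω] {P : Measure Ω}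
  {X : Ω → ι → ℝ} {Y : Ω → κ → ℝ} {Z : Ω → ν → ℝ}

lemma crossCovMatrix_transpose : (crossCovMatrix X Y P)ᵀ = crossCovMatrix Y X P := by
  ext i j
  exact ProbabilityTheory.covariance_comm _ _

lemma crossCovMatrix_self_isSymm : (crossCovMatrix X X P).IsSymm :=
  crossCovMatrix_transpose

lemma crossCovMatrix_sumElim {X' : Ω → ι → ℝ} {Y' : Ω → κ → ℝ} :
    crossCovMatrix (fun ω => Sum.elim (X ω) (Y ω)) (fun ω => Sum.elim (X' ω) (Y' ω)) P =
      fromBlocks (crossCovMatrix X X' P) (crossCovMatrix X Y' P)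
        (crossCovMatrix Y X' P) (crossCovMatrix Y Y' P) := by
  ext (i | j) (i' | j') <;> rfl

lemma memLp_mulVec_apply [Fintype ι] {p : ENNReal} (B : Matrix κ ι ℝ)
    (hX : ∀ i, MemLp (fun ω => X ω i) p P) (k : κ) :
    MemLp (fun ω => (B *ᵥ X ω) k) p P :=
  memLp_finsetSum _ fun i _ => (hX i).const_mul (B k i)

lemma crossCovMatrix_add_left [IsFiniteMeasure P] {X' : Ω → ι → ℝ}
    (hX : ∀ i, MemLp (fun ω => X ω i) 2 P) (hX' : ∀ i, MemLp (fun ω => X' ω i) 2 P)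
    (hZ : ∀ k, MemLp (fun ω => Z ω k) 2 P) :
    crossCovMatrix (fun ω => X ω + X' ω) Z P = crossCovMatrix X Z P + crossCovMatrix X' Z P := by
  ext i k
  exact ProbabilityTheory.covariance_add_left (hX i) (hX' i) (hZ k)

lemma crossCovMatrix_const_add_left [IsProbabilityMeasure P] (m : ι → ℝ)
    (hX : ∀ i, Integrable (fun ω => X ω i) P) :
    crossCovMatrix (fun ω => m + X ω) Z P = crossCovMatrix X Z P := by
  ext i k
  exact ProbabilityTheory.covariance_const_add_left (hX i) (m i)

lemma crossCovMatrix_mulVec_left [IsFiniteMeasure P] [Fintype ι] (B : Matrix κ ι ℝ)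
    (hX : ∀ i, MemLp (fun ω => X ω i) 2 P) (hZ : ∀ k, MemLp (fun ω => Z ω k) 2 P) :
    crossCovMatrix (fun ω => B *ᵥ X ω) Z P = B * crossCovMatrix X Z P := by
  ext k l
  simp only [crossCovMatrix, of_apply, mul_apply, mulVec, dotProduct]
  rw [ProbabilityTheory.covariance_fun_sum_left (X := fun i ω => B k i * X ω i)
    (fun i => (hX i).const_mul (B k i)) (hZ l)]
  simp_rw [ProbabilityTheory.covariance_const_mul_left]

lemma memLp_apply_of_eq_affine_add [IsFiniteMeasure P] [Fintype ι] {p : ENNReal}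
    {E : Ω → κ → ℝ} {m : κ → ℝ} {B : Matrix κ ι ℝ} {μ : ι → ℝ}
    (hY : ∀ ω, Y ω = m + B *ᵥ (X ω - μ) + E ω)
    (hX : ∀ i, MemLp (fun ω => X ω i) p P) (hE : ∀ k, MemLp (fun ω => E ω k) p P) (k : κ) :
    MemLp (fun ω => Y ω k) p P := by
  simp_rw [hY]
  exact ((memLp_const (m k)).add
    (memLp_mulVec_apply B (fun i => (hX i).sub (memLp_const (μ i))) k)).add (hE k)

lemma crossCovMatrix_of_eq_affine_add [IsProbabilityMeasure P] [Fintype ι] {E : Ω → κ → ℝ}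
    {m : κ → ℝ} {B : Matrix κ ι ℝ} {μ : ι → ℝ}
    (hY : ∀ ω, Y ω = m + B *ᵥ (X ω - μ) + E ω)
    (hX : ∀ i, MemLp (fun ω => X ω i) 2 P) (hE : ∀ k, MemLp (fun ω => E ω k) 2 P)
    (hZ : ∀ l, MemLp (fun ω => Z ω l) 2 P) :
    crossCovMatrix Y Z P = B * crossCovMatrix X Z P + crossCovMatrix E Z P := by
  have hBX := memLp_mulVec_apply B hX
  have hsplit : Y = fun ω => (m - B *ᵥ μ + B *ᵥ X ω) + E ω := by
    funext ω
    rw [hY, mulVec_sub]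
    abel
  have hshift : ∀ k, MemLp (fun ω => (m - B *ᵥ μ + B *ᵥ X ω) k) 2 P :=
    fun k => (memLp_const ((m - B *ᵥ μ) k)).add (hBX k)
  rw [hsplit, crossCovMatrix_add_left hshift hE hZ,
    crossCovMatrix_const_add_left _ fun k => (hBX k).integrable one_le_two,
    crossCovMatrix_mulVec_left B hX hZ]

end CrossCovMatrix

theorem induction_step_joint_covariance
    {Ω : Type*} [MeasurableSpace Ω] (P : Measure Ω) [IsProbabilityMeasure P]
    (a c : ℕ) (X : Ω → Fin a → ℝ) (E : Ω → Fin c → ℝ)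
    (hXsq : ∀ i : Fin a, MemLp (fun ω => X ω i) 2 P)
    (hEsq : ∀ j : Fin c, MemLp (fun ω => E ω j) 2 P)
    (Sg : Matrix (Fin a) (Fin a) ℝ) (D : Matrix (Fin c) (Fin c) ℝ)
    (hXcov : ∀ i i' : Fin a,
      covariance (fun ω => X ω i) (fun ω => X ω i') P = Sg i i')
    (hEcov : ∀ j j' : Fin c,
      covariance (fun ω => E ω j) (fun ω => E ω j') P = D j j')
    (hXE : ∀ (i : Fin a) (j : Fin c),
      covariance (fun ω => X ω i) (fun ω => E ω j) P = 0)
    (B : Matrix (Fin c) (Fin a) ℝ) (μX : Fin a → ℝ) (μnew : Fin c → ℝ)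
    (Ynew : Ω → Fin c → ℝ)
    (hYnew : ∀ ω, Ynew ω = μnew + B *ᵥ (X ω - μX) + E ω)
    (W : Ω → (Fin a ⊕ Fin c) → ℝ)
    (hW : ∀ ω, W ω = Sum.elim (X ω) (Ynew ω)) :
    ∀ u v : Fin a ⊕ Fin c,
      covariance (fun ω => W ω u) (fun ω => W ω v) P =
        (Matrix.fromBlocks Sg (Sg * Bᵀ) (B * Sg) (B * Sg * Bᵀ + D)) u v := by
  have covXX : crossCovMatrix X X P = Sg := Matrix.ext hXcov
  have covEE : crossCovMatrix E E P = D := Matrix.ext hEcov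
  have covXE : crossCovMatrix X E P = 0 := Matrix.ext hXE
  have hYsq := memLp_apply_of_eq_affine_add hYnew hXsq hEsq
  have covYX : crossCovMatrix Ynew X P = B * Sg := by
    rw [crossCovMatrix_of_eq_affine_add hYnew hXsq hEsq hXsq, covXX,
      ← crossCovMatrix_transpose, covXE, transpose_zero, add_zero]
  have covXY : crossCovMatrix X Ynew P = Sg * Bᵀ := by
    rw [← crossCovMatrix_transpose, covYX, transpose_mul, ← covXX,
      crossCovMatrix_self_isSymm.eq]
  have covEY : crossCovMatrix E Ynew P = D := by
    rw [← crossCovMatrix_transpose, crossCovMatrix_of_eq_affine_add hYnew hXsq hEsq hEsq, covXE,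
      Matrix.mul_zero, zero_add, crossCovMatrix_self_isSymm.eq, covEE]
  have covYY : crossCovMatrix Ynew Ynew P = B * Sg * Bᵀ + D := by
    rw [crossCovMatrix_of_eq_affine_add hYnew hXsq hEsq hYsq, covXY, covEY, Matrix.mul_assoc]
  have covWW : crossCovMatrix W W P = fromBlocks Sg (Sg * Bᵀ) (B * Sg) (B * Sg * Bᵀ + D) := by
    rw [funext hW, crossCovMatrix_sumElim, covXX, covXY, covYX, covYY]
  exact congrFun₂ covWW
end

section
/- Let a c : ℕ, Σ : Matrix (Fin a) (Fin a) ℝ with IsUnit Σ.det, D : Matrix (Fin c) (Fin c) ℝ with IsUnit D.det, and B : Matrix (Fin c) (Fin a) ℝ. Then (Matrix.fromBlocks Σ (Σ * Bᵀ) (B * Σ) (B * Σ * Bᵀ + D))⁻¹ = Matrix.fromBlocks (Σ⁻¹ + Bᵀ * D⁻¹ * B) (-(Bᵀ * D⁻¹)) (-(D⁻¹ * B)) (D⁻¹). -/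
open Matrix

theorem precision_matrix_of_induction_step
    (a c : ℕ) (Sg : Matrix (Fin a) (Fin a) ℝ) (hSg : IsUnit Sg.det)
    (D : Matrix (Fin c) (Fin c) ℝ) (hD : IsUnit D.det)
    (B : Matrix (Fin c) (Fin a) ℝ) :
    (Matrix.fromBlocks Sg (Sg * Bᵀ) (B * Sg) (B * Sg * Bᵀ + D))⁻¹ =
      Matrix.fromBlocks (Sg⁻¹ + Bᵀ * D⁻¹ * B) (-(Bᵀ * D⁻¹)) (-(D⁻¹ * B)) D⁻¹ := by
  apply inv_eq_right_inv
  rw [fromBlocks_multiply, ← fromBlocks_one]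
  have h1 : Sg * Sg⁻¹ = 1 := mul_nonsing_inv Sg hSg
  have h2 : D * D⁻¹ = 1 := mul_nonsing_inv D hD
  simp only [Matrix.mul_add, Matrix.add_mul, Matrix.mul_neg, Matrix.mul_assoc, h1, h2,
    mul_nonsing_inv_cancel_left D _ hD, Matrix.mul_one, add_neg_cancel_right,
    neg_add_cancel_left, add_neg_cancel, neg_add, neg_add_cancel_right, add_neg_cancel_left,
    neg_add_cancel]
  abel
end

section
/- Let α be a measurable space equipped with a measure μα, let β be a type and n : ℕ. Let f : (Fin n → α) → β → ℝ satisfy f v w > 0 for all v and w (strict positivity), and suppose that for every i : Fin n, v : Fin n → α, and w : β, the function t ↦ f (Function.update v i t) w is integrable with respect to μα and its integral is strictly positive. Define the conditional density of coordinate i at value a, given the remaining coordinates of v and the conditioning fields w, by cd i a v w := f (Function.update v i a) w / ∫ t, f (Function.update v i t) w ∂μα. Then for all y x : Fin n → α and all w : β, f y w / f x w = ∏ i : Fin n, (cd i (y i) (u i) w) / (cd i (x i) (u i) w), where for each i : Fin n the hybrid configuration u i : Fin n → α is defined by u i j = if (j : ℕ) < (i : ℕ) then y j else x j. -/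
/-!
Walking from `x` to `y` one coordinate at a time, the ratio `f y w / f x w` telescopes into the
product of the ratios of `f` at consecutive hybrid configurations. Two consecutive hybrids differ
only in coordinate `i`, so their ratio is a ratio of values of `f (update v i ·) w` for one `v`,
and dividing both by the normalising integral `∫ t, f (update v i t) w` turns it into the ratio
of conditional densities.
-/

open MeasureTheory

/-- The conditional density of coordinate `i` at value `a`, given the remaining
coordinates of `v` and the conditioning fields `w`:
`cd i a v w = f (update v i a) w / ∫ t, f (update v i t) w`. -/
noncomputable def cd {α β : Type*} [MeasurableSpace α] (μα : Measure α) {n : ℕ}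
    (f : (Fin n → α) → β → ℝ) (i : Fin n) (a : α) (v : Fin n → α) (w : β) : ℝ :=
  f (Function.update v i a) w / ∫ t, f (Function.update v i t) w ∂μα

open Finset

theorem Finset.prod_range_div_of_ne_zero {G₀ : Type*} [CommGroupWithZero G₀] (f : ℕ → G₀)
    {n : ℕ} (hf : ∀ k ≤ n, f k ≠ 0) : ∏ i ∈ range n, f (i + 1) / f i = f n / f 0 := by
  refine prod_range_induction _ (fun k => f k / f 0) (div_self (hf 0 n.zero_le)) n fun k hk => ?_
  rw [div_mul_div_comm, mul_comm (f k), mul_div_mul_right _ _ (hf k hk.le)]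

def hybrid {α : Type*} {n : ℕ} (y x : Fin n → α) (k : ℕ) : Fin n → α :=
  fun j => if (j : ℕ) < k then y j else x j

section hybrid

variable {α : Type*} {n : ℕ} (y x : Fin n → α)

@[simp]
theorem hybrid_zero : hybrid y x 0 = x := by
  funext j
  simp [hybrid]

theorem hybrid_of_le {k : ℕ} (hk : n ≤ k) : hybrid y x k = y := by
  funext j
  simp [hybrid, j.isLt.trans_le hk]

theorem update_hybrid_right (i : Fin n) :
    Function.update (hybrid y x i) i (x i) = hybrid y x i :=
  Function.update_eq_self_iff.mpr (by simp [hybrid])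

theorem update_hybrid_left (i : Fin n) :
    Function.update (hybrid y x i) i (y i) = hybrid y x (i + 1) := by
  funext j
  rcases lt_trichotomy (j : ℕ) i with hlt | heq | hgt
  · have hne : j ≠ i := Fin.ne_of_lt hlt
    simp [hybrid, hne, hlt, hlt.trans (Nat.lt_succ_self _)]
  · obtain rfl := Fin.ext heq
    simp [hybrid]
  · have hne : j ≠ i := Fin.ne_of_gt hgt
    simp [hybrid, hne, hgt.not_gt, Nat.not_lt.mpr hgt]

end hybrid

theorem cd_div_cd {α β : Type*} [MeasurableSpace α] (μα : Measure α) {n : ℕ}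
    (f : (Fin n → α) → β → ℝ) (i : Fin n) (a b : α) (v : Fin n → α) (w : β)
    (hint : ∫ t, f (Function.update v i t) w ∂μα ≠ 0) :
    cd μα f i a v w / cd μα f i b v w =
      f (Function.update v i a) w / f (Function.update v i b) w :=
  div_div_div_cancel_right₀ hint _ _

theorem hammersley_clifford_colwise_general
    {α β : Type*} [MeasurableSpace α] (μα : Measure α) {n : ℕ}
    (f : (Fin n → α) → β → ℝ)
    (hpos : ∀ (v : Fin n → α) (w : β), 0 < f v w)
    (hintpos : ∀ (i : Fin n) (v : Fin n → α) (w : β),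
      0 < ∫ t, f (Function.update v i t) w ∂μα)
    (y x : Fin n → α) (w : β)
    (u : Fin n → Fin n → α)
    (hu : ∀ i j : Fin n, u i j = if (j : ℕ) < (i : ℕ) then y j else x j) :
    f y w / f x w =
      ∏ i : Fin n, (cd μα f i (y i) (u i) w) / (cd μα f i (x i) (u i) w) := by
  obtain rfl : u = fun i : Fin n => hybrid y x i := funext fun i => funext (hu i)
  have step : ∀ i : Fin n, cd μα f i (y i) (hybrid y x i) w / cd μα f i (x i) (hybrid y x i) w =
      f (hybrid y x (i + 1)) w / f (hybrid y x i) w := fun i => by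
    rw [cd_div_cd μα f i _ _ _ w (hintpos i _ w).ne', update_hybrid_left, update_hybrid_right]
  rw [prod_congr rfl fun i _ => step i,
    Fin.prod_univ_eq_prod_range (fun k => f (hybrid y x (k + 1)) w / f (hybrid y x k) w),
    prod_range_div_of_ne_zero (fun k => f (hybrid y x k) w) (fun k _ => (hpos _ w).ne'),
    hybrid_zero, hybrid_of_le y x le_rfl]

theorem hammersley_clifford_colwise
    {α β : Type*} [MeasurableSpace α] (μα : Measure α) {n : ℕ}
    (f : (Fin n → α) → β → ℝ)
    (hpos : ∀ (v : Fin n → α) (w : β), 0 < f v w)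
    (hint : ∀ (i : Fin n) (v : Fin n → α) (w : β),
      Integrable (fun t => f (Function.update v i t) w) μα)
    (hintpos : ∀ (i : Fin n) (v : Fin n → α) (w : β),
      0 < ∫ t, f (Function.update v i t) w ∂μα)
    (y x : Fin n → α) (w : β)
    (u : Fin n → Fin n → α)
    (hu : ∀ i j : Fin n, u i j = if (j : ℕ) < (i : ℕ) then y j else x j) :
    f y w / f x w =
      ∏ i : Fin n, (cd μα f i (y i) (u i) w) / (cd μα f i (x i) (u i) w) :=
  hammersley_clifford_colwise_general μα f hpos hintpos y x w u hu
end

section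
/- Let α be a measurable space with a Zero instance and a measure μα, let β be a type and n : ℕ. Let f : (Fin n → α) → β → ℝ satisfy f v w > 0 for all v, w, and suppose that for every i : Fin n, v : Fin n → α, and w : β, the function t ↦ f (Function.update v i t) w is integrable with respect to μα and its integral is strictly positive. Define Q : (Fin n → α) → β → ℝ by Q y w := Real.log (f y w / f (fun _ => 0) w), and define the conditional density cd i a v w := f (Function.update v i a) w / ∫ t, f (Function.update v i t) w ∂μα. Then for every y : Fin n → α, i : Fin n, and w : β, writing yᵢ := Function.update y i 0, one has Q y w - Q yᵢ w = Real.log ((cd i (y i) y w) / (cd i 0 y w)). -/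
open MeasureTheory

/-- `Q y w = ln (f y w / f 0 w)`, the negpotential function. -/
noncomputable def Q {α β : Type*} [Zero α] {n : ℕ}
    (f : (Fin n → α) → β → ℝ) (y : Fin n → α) (w : β) : ℝ :=
  Real.log (f y w / f (fun _ => 0) w)

theorem hammersley_clifford_alternative_view
    {α β : Type*} [MeasurableSpace α] [Zero α] (μα : Measure α) {n : ℕ}
    (f : (Fin n → α) → β → ℝ)
    (hpos : ∀ (v : Fin n → α) (w : β), 0 < f v w)
    (hint : ∀ (i : Fin n) (v : Fin n → α) (w : β),
      Integrable (fun t => f (Function.update v i t) w) μα)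
    (hintpos : ∀ (i : Fin n) (v : Fin n → α) (w : β),
      0 < ∫ t, f (Function.update v i t) w ∂μα) :
    ∀ (y : Fin n → α) (i : Fin n) (w : β),
      Q f y w - Q f (Function.update y i 0) w =
        Real.log ((cd μα f i (y i) y w) / (cd μα f i 0 y w)) := by
  intro y i w
  have hI := (hintpos i y w).ne'
  have h0 := (hpos (fun _ => 0) w).ne'
  have hy := (hpos y w).ne'
  have hyi := (hpos (Function.update y i 0) w).ne'
  simp only [Q, cd, Function.update_eq_self]
  have key : (f y w / ∫ t, f (Function.update y i t) w ∂μα) /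
      (f (Function.update y i 0) w / ∫ t, f (Function.update y i t) w ∂μα) =
      f y w / f (Function.update y i 0) w := by
    field_simp
  rw [Real.log_div hy h0, Real.log_div hyi h0, key, Real.log_div hy hyi]
  ring
end
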